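/- Let n ≥ 2 and let E_1, …, E_n be Banach spaces such that E_2', …, E_n' have the Littlewood–Orlicz property. Then every continuous n-linear form A : E_1 × ⋯ × E_n → 𝕂 is absolutely (1;1,2,…,2)-summing. -/

import Mathlib

open scoped BigOperators NNReal ENNReal

/-- The weak `ℓ_r` norm of a finite family `(x_j)` in a normed space:
`sup_{‖φ‖ ≤ 1} (∑_j ‖φ(x_j)‖^r)^(1/r)`. -/
noncomputable def weakNorm (𝕜 : Type*) [RCLike 𝕜] {E : Type*} [NormedAddCommGroup E]
    [NormedSpace 𝕜 E] (r : ℝ) {m : ℕ} (x : Fin m → E) : ℝ :=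
  ⨆ φ : {φ : E →L[𝕜] 𝕜 // ‖φ‖ ≤ 1}, (∑ j, ‖φ.1 (x j)‖ ^ r) ^ (1 / r)

/-- A Banach space `X` has the Littlewood–Orlicz property: `ℓ₁ʷ(X)` embeds continuously into
`ℓ₂ ⊗_π X = ℓ₂⟨X⟩`, expressed through the Bu–Diestel duality characterization:
`∑_j |ψ_j(x_j)| ≤ C ‖(x_j)‖_{ℓ₁ʷ(X)} ‖(ψ_j)‖_{ℓ₂ʷ(X')}` for all finite families. -/
def LittlewoodOrlicz (𝕜 : Type*) [RCLike 𝕜] (X : Type*) [NormedAddCommGroup X]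
    [NormedSpace 𝕜 X] : Prop :=
  ∃ C > 0, ∀ (m : ℕ) (x : Fin m → X) (ψ : Fin m → (X →L[𝕜] 𝕜)),
    ∑ j, ‖ψ j (x j)‖ ≤ C * weakNorm 𝕜 1 x * weakNorm 𝕜 2 ψ

/-- The Rademacher norm of a finite family `(x_j)_{j=1}^m` in a normed space:
`(2^{-m} ∑_{ε ∈ {-1,1}^m} ‖∑_j ε_j x_j‖²)^{1/2}`. -/
noncomputable def radNorm {E : Type*} [NormedAddCommGroup E] {m : ℕ} (x : Fin m → E) : ℝ :=
  ((∑ ε : Fin m → Bool, ‖∑ j, (if ε j then x j else -x j)‖ ^ 2) / (2 : ℝ) ^ m) ^ ((1 : ℝ) / 2)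

/-- A continuous multilinear map is absolutely `(p; p₁, …, pₙ)`-summing. -/
def IsAbsSumming {𝕜 : Type*} [RCLike 𝕜] {n : ℕ} {E : Fin n → Type*}
    [∀ i, NormedAddCommGroup (E i)] [∀ i, NormedSpace 𝕜 (E i)]
    {F : Type*} [NormedAddCommGroup F] [NormedSpace 𝕜 F]
    (p : ℝ) (ps : Fin n → ℝ) (A : ContinuousMultilinearMap 𝕜 E F) : Prop :=
  ∃ C > 0, ∀ (m : ℕ) (x : ∀ i, Fin m → E i),
    (∑ j, ‖A (fun i => x i j)‖ ^ p) ^ (1 / p) ≤ C * ∏ i, weakNorm 𝕜 (ps i) (x i)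

/-!
Induction on the number of variables, peeling off the last one. A linear form `φ` satisfies
`∑ |φ(x_j)| ≤ ‖φ‖ ‖(x_j)‖_{ℓ₁ʷ}`. For `n + 1` variables write `A(x_j) = ψ_j(φ_j)` with
`φ_j = A(x_j¹, …, x_jⁿ, ·) ∈ E_{n+1}'` and `ψ_j` the image of `x_jⁿ⁺¹` in the bidual. The
Littlewood–Orlicz property of `E_{n+1}'` bounds `∑ |ψ_j(φ_j)|` by
`‖(φ_j)‖_{ℓ₁ʷ} ‖(x_jⁿ⁺¹)‖_{ℓ₂ʷ}`, and testing `(φ_j)` against `Φ` in the unit ball of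
`E_{n+1}''` gives the `n`-linear form `Φ ∘ A(·, …, ·, -)` of norm `≤ ‖A‖`, to which the
induction hypothesis applies.
-/

section WeakNorm

variable {𝕜 : Type*} [RCLike 𝕜] {E : Type*} [NormedAddCommGroup E] [NormedSpace 𝕜 E]

theorem weakNorm_nonneg (r : ℝ) {m : ℕ} (x : Fin m → E) : 0 ≤ weakNorm 𝕜 r x :=
  Real.iSup_nonneg fun _ => by positivity

theorem le_weakNorm {r : ℝ} (hr : 0 ≤ r) {m : ℕ} (x : Fin m → E) {φ : E →L[𝕜] 𝕜}
    (hφ : ‖φ‖ ≤ 1) : (∑ j, ‖φ (x j)‖ ^ r) ^ (1 / r) ≤ weakNorm 𝕜 r x := by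
  refine le_ciSup (f := fun φ : {φ : E →L[𝕜] 𝕜 // ‖φ‖ ≤ 1} => (∑ j, ‖φ.1 (x j)‖ ^ r) ^ (1 / r))
    ⟨(∑ j, ‖x j‖ ^ r) ^ (1 / r), ?_⟩ ⟨φ, hφ⟩
  rintro _ ⟨φ, rfl⟩
  dsimp only
  gcongr with j
  exact φ.1.le_of_opNorm_le φ.2 _ |>.trans_eq (one_mul _)

theorem weakNorm_le {r : ℝ} {m : ℕ} {x : Fin m → E} {c : ℝ}
    (h : ∀ φ : E →L[𝕜] 𝕜, ‖φ‖ ≤ 1 → (∑ j, ‖φ (x j)‖ ^ r) ^ (1 / r) ≤ c) :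
    weakNorm 𝕜 r x ≤ c :=
  have : Nonempty {φ : E →L[𝕜] 𝕜 // ‖φ‖ ≤ 1} := ⟨⟨0, by simp⟩⟩
  ciSup_le fun φ => h φ.1 φ.2

theorem weakNorm_one_le {m : ℕ} {x : Fin m → E} {c : ℝ}
    (h : ∀ φ : E →L[𝕜] 𝕜, ‖φ‖ ≤ 1 → ∑ j, ‖φ (x j)‖ ≤ c) : weakNorm 𝕜 1 x ≤ c :=
  weakNorm_le fun φ hφ => by simpa using h φ hφ

theorem rpow_sum_norm_apply_le_opNorm_mul_weakNorm {r : ℝ} (hr : 0 < r) (ψ : E →L[𝕜] 𝕜)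
    {m : ℕ} (x : Fin m → E) :
    (∑ j, ‖ψ (x j)‖ ^ r) ^ (1 / r) ≤ ‖ψ‖ * weakNorm 𝕜 r x := by
  rcases (norm_nonneg ψ).eq_or_lt with hψ | hψ
  · obtain rfl : ψ = 0 := norm_eq_zero.1 hψ.symm
    simp [Real.zero_rpow hr.ne', hr.ne']
  set φ : E →L[𝕜] 𝕜 := (‖ψ‖⁻¹ : 𝕜) • ψ
  have hφ : ‖φ‖ ≤ 1 := by
    simp [φ, norm_smul, inv_mul_cancel₀ hψ.ne']
  have hψφ : ∀ j, ‖ψ (x j)‖ ^ r = ‖ψ‖ ^ r * ‖φ (x j)‖ ^ r := fun j => by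
    rw [← Real.mul_rpow (norm_nonneg _) (norm_nonneg _)]
    simp [φ, mul_inv_cancel_left₀ hψ.ne']
  calc (∑ j, ‖ψ (x j)‖ ^ r) ^ (1 / r)
      = ‖ψ‖ * (∑ j, ‖φ (x j)‖ ^ r) ^ (1 / r) := by
        rw [Finset.sum_congr rfl fun j _ => hψφ j, ← Finset.mul_sum,
          Real.mul_rpow (by positivity) (by positivity), ← Real.rpow_mul hψ.le,
          mul_one_div_cancel hr.ne', Real.rpow_one]
    _ ≤ ‖ψ‖ * weakNorm 𝕜 r x := by gcongr; exact le_weakNorm hr.le x hφ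

theorem sum_norm_apply_le_opNorm_mul_weakNorm_one (ψ : E →L[𝕜] 𝕜) {m : ℕ} (x : Fin m → E) :
    ∑ j, ‖ψ (x j)‖ ≤ ‖ψ‖ * weakNorm 𝕜 1 x := by
  simpa using rpow_sum_norm_apply_le_opNorm_mul_weakNorm one_pos ψ x

theorem weakNorm_comp_le {F : Type*} [NormedAddCommGroup F] [NormedSpace 𝕜 F]
    (T : E →L[𝕜] F) {r : ℝ} (hr : 0 < r) {m : ℕ} (x : Fin m → E) :
    weakNorm 𝕜 r (fun j => T (x j)) ≤ ‖T‖ * weakNorm 𝕜 r x := by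
  refine weakNorm_le fun φ hφ => ?_
  have hφT : ‖φ.comp T‖ ≤ ‖T‖ :=
    (φ.opNorm_comp_le T).trans (mul_le_of_le_one_left (norm_nonneg T) hφ)
  exact (rpow_sum_norm_apply_le_opNorm_mul_weakNorm hr (φ.comp T) x).trans
    (mul_le_mul_of_nonneg_right hφT (weakNorm_nonneg r x))

end WeakNorm

/-- The `(1; 1, 2, …, 2)`-summing inequality with constant `C ‖A‖`, uniformly in the form `A`:
the induction step applies it to all the forms `Φ ∘ A(·, …, ·, -)` at once. -/
def UniformOneTwoSumming (𝕜 : Type*) [RCLike 𝕜] {n : ℕ} (E : Fin n → Type*)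
    [∀ i, NormedAddCommGroup (E i)] [∀ i, NormedSpace 𝕜 (E i)] (C : ℝ) : Prop :=
  ∀ (A : ContinuousMultilinearMap 𝕜 E 𝕜) (m : ℕ) (x : ∀ i, Fin m → E i),
    ∑ j, ‖A (fun i => x i j)‖ ≤ C * ‖A‖ * ∏ i, weakNorm 𝕜 (if i.val = 0 then 1 else 2) (x i)

section OneTwoSumming

variable {𝕜 : Type*} [RCLike 𝕜]

theorem ContinuousMultilinearMap.apply_eq_curryRight_apply {n : ℕ} {E : Fin (n + 1) → Type*}
    [∀ i, NormedAddCommGroup (E i)] [∀ i, NormedSpace 𝕜 (E i)]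
    (A : ContinuousMultilinearMap 𝕜 E 𝕜) (v : ∀ i, E i) :
    A v = A.curryRight (Fin.init v) (v (Fin.last n)) := by
  rw [ContinuousMultilinearMap.curryRight_apply, Fin.snoc_init_self]

theorem uniformOneTwoSumming_fin_one (E : Fin 1 → Type*) [∀ i, NormedAddCommGroup (E i)]
    [∀ i, NormedSpace 𝕜 (E i)] : UniformOneTwoSumming 𝕜 E 1 := by
  intro A m x
  set T : E 0 →L[𝕜] 𝕜 := A.curryRight (fun i => i.elim0)
  have hT : ‖T‖ ≤ ‖A‖ := by
    simpa [ContinuousMultilinearMap.curryRight_norm] using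
      A.curryRight.le_opNorm (fun i => i.elim0)
  have hAT : ∀ j, A (fun i => x i j) = T (x 0 j) := fun j => by
    rw [A.apply_eq_curryRight_apply]
    congr 2
    exact Subsingleton.elim _ _
  calc ∑ j, ‖A (fun i => x i j)‖ = ∑ j, ‖T (x 0 j)‖ := by simp only [hAT]
    _ ≤ ‖T‖ * weakNorm 𝕜 1 (x 0) := sum_norm_apply_le_opNorm_mul_weakNorm_one T (x 0)
    _ ≤ 1 * ‖A‖ * ∏ i, weakNorm 𝕜 (if i.val = 0 then 1 else 2) (x i) := by
      simpa using mul_le_mul_of_nonneg_right hT (weakNorm_nonneg 1 (x 0))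

theorem UniformOneTwoSumming.snoc {k : ℕ} {E : Fin (k + 2) → Type*}
    [∀ i, NormedAddCommGroup (E i)] [∀ i, NormedSpace 𝕜 (E i)] {C₁ C₂ : ℝ}
    (hC₁ : 0 ≤ C₁) (hC₂ : 0 ≤ C₂)
    (hinit : UniformOneTwoSumming 𝕜 (fun i : Fin (k + 1) => E i.castSucc) C₁)
    (hlast : ∀ (m : ℕ) (φ : Fin m → StrongDual 𝕜 (E (Fin.last _)))
      (ψ : Fin m → StrongDual 𝕜 (StrongDual 𝕜 (E (Fin.last _)))),
      ∑ j, ‖ψ j (φ j)‖ ≤ C₂ * weakNorm 𝕜 1 φ * weakNorm 𝕜 2 ψ) :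
    UniformOneTwoSumming 𝕜 E (C₂ * C₁) := by
  intro A m x
  set φ : Fin m → StrongDual 𝕜 (E (Fin.last _)) :=
    fun j => A.curryRight (fun i => x i.castSucc j)
  set ψ := fun j => NormedSpace.inclusionInDoubleDual 𝕜 _ (x (Fin.last _) j)
  set P := ∏ i : Fin (k + 1), weakNorm 𝕜 (if i.val = 0 then 1 else 2) (x i.castSucc)
  have hP : 0 ≤ P := Finset.prod_nonneg fun i _ => weakNorm_nonneg _ _
  have hφ : weakNorm 𝕜 1 φ ≤ C₁ * ‖A‖ * P := by
    refine weakNorm_one_le fun Φ hΦ => ?_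
    have hB : ‖Φ.compContinuousMultilinearMap A.curryRight‖ ≤ ‖A‖ :=
      (Φ.norm_compContinuousMultilinearMap_le _).trans <| by
        rw [A.curryRight_norm]; exact mul_le_of_le_one_left (norm_nonneg A) hΦ
    calc ∑ j, ‖Φ (φ j)‖ ≤ C₁ * ‖Φ.compContinuousMultilinearMap A.curryRight‖ * P :=
          hinit (Φ.compContinuousMultilinearMap A.curryRight) m fun i => x i.castSucc
      _ ≤ C₁ * ‖A‖ * P := by gcongr
  have hψ : weakNorm 𝕜 2 ψ ≤ weakNorm 𝕜 2 (x (Fin.last _)) :=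
    (weakNorm_comp_le _ two_pos _).trans
      (mul_le_of_le_one_left (weakNorm_nonneg _ _) (NormedSpace.inclusionInDoubleDual_norm_le _ _))
  calc ∑ j, ‖A (fun i => x i j)‖ = ∑ j, ‖ψ j (φ j)‖ := by
        simp only [A.apply_eq_curryRight_apply]; rfl
    _ ≤ C₂ * weakNorm 𝕜 1 φ * weakNorm 𝕜 2 ψ := hlast m φ ψ
    _ ≤ C₂ * (C₁ * ‖A‖ * P) * weakNorm 𝕜 2 (x (Fin.last _)) := by
        gcongr
        exact weakNorm_nonneg _ _
    _ = C₂ * C₁ * ‖A‖ * ∏ i, weakNorm 𝕜 (if i.val = 0 then 1 else 2) (x i) := by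
        rw [Fin.prod_univ_castSucc, Fin.val_last, if_neg k.succ_ne_zero]
        simp only [Fin.val_castSucc]
        ring

theorem exists_uniformOneTwoSumming (k : ℕ)
    (E : Fin (k + 1) → Type*) [∀ i, NormedAddCommGroup (E i)] [∀ i, NormedSpace 𝕜 (E i)]
    (hLO : ∀ i : Fin (k + 1), 1 ≤ i.val → LittlewoodOrlicz 𝕜 (E i →L[𝕜] 𝕜)) :
    ∃ C > 0, UniformOneTwoSumming 𝕜 E C := by
  induction k with
  | zero => exact ⟨1, one_pos, uniformOneTwoSumming_fin_one E⟩
  | succ k ih =>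
    obtain ⟨C₁, hC₁, hinit⟩ := ih (fun i => E i.castSucc) fun i hi => hLO i.castSucc hi
    obtain ⟨C₂, hC₂, hlast⟩ := hLO (Fin.last (k + 1)) k.succ_pos
    exact ⟨C₂ * C₁, by positivity, hinit.snoc hC₁.le hC₂.le hlast⟩

end OneTwoSumming

theorem littlewood_orlicz_one_two_general {𝕜 : Type*} [RCLike 𝕜] {n : ℕ} (hn : 2 ≤ n)
    (E : Fin n → Type*) [∀ i, NormedAddCommGroup (E i)] [∀ i, NormedSpace 𝕜 (E i)]
    (hLO : ∀ i : Fin n, 1 ≤ i.val → LittlewoodOrlicz 𝕜 (E i →L[𝕜] 𝕜))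
    (A : ContinuousMultilinearMap 𝕜 E 𝕜) :
    IsAbsSumming 1 (fun i => if i.val = 0 then 1 else 2) A := by
  obtain ⟨k, rfl⟩ : ∃ k, n = k + 1 := ⟨n - 1, by omega⟩
  obtain ⟨C, hC, hE⟩ := exists_uniformOneTwoSumming k E hLO
  refine ⟨C * (‖A‖ + 1), by positivity, fun m x => ?_⟩
  calc (∑ j, ‖A (fun i => x i j)‖ ^ (1 : ℝ)) ^ (1 / (1 : ℝ))
      = ∑ j, ‖A (fun i => x i j)‖ := by simp
    _ ≤ C * ‖A‖ * ∏ i, weakNorm 𝕜 (if i.val = 0 then 1 else 2) (x i) := hE A m x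
    _ ≤ C * (‖A‖ + 1) * ∏ i, weakNorm 𝕜 (if i.val = 0 then 1 else 2) (x i) := by
      gcongr
      · exact Finset.prod_nonneg fun i _ => weakNorm_nonneg _ _
      · linarith

/-- If `E₂', …, E_n'` have the Littlewood–Orlicz property, then every continuous `n`-linear
form on `E₁ × ⋯ × E_n` is absolutely `(1; 1, 2, …, 2)`-summing. -/
theorem littlewood_orlicz_one_two {𝕜 : Type*} [RCLike 𝕜] {n : ℕ} (hn : 2 ≤ n)
    (E : Fin n → Type*) [∀ i, NormedAddCommGroup (E i)] [∀ i, NormedSpace 𝕜 (E i)]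
    [∀ i, CompleteSpace (E i)]
    (hLO : ∀ i : Fin n, 1 ≤ i.val → LittlewoodOrlicz 𝕜 (E i →L[𝕜] 𝕜))
    (A : ContinuousMultilinearMap 𝕜 E 𝕜) :
    IsAbsSumming 1 (fun i => if i.val = 0 then 1 else 2) A :=
  littlewood_orlicz_one_two_general hn E hLO A
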